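/- Let β, x₁,…,x_d, b₁, b₂,… be independent indeterminates, work in the ring of formal power series over ℤ in these variables, and for a variable y set ȳ := -y/(1+βy). Fix j with 1 ≤ j ≤ d and k ≥ 0. Then for every integer m with m ≥ k: Σ_{p=0}^{d-1} Σ_{s=0}^{p} C(p,s) β^s G^{(k)}_{m-p+s} · (-1)^p ē_p^{(j)} = x_j^{m-k} · [x_j|b]^k, where C(p,s) is the usual binomial coefficient and ē_p^{(j)} denotes the p-th elementary symmetric polynomial in the d-1 quantities -x̄_i = x_i/(1+βx_i) for 1 ≤ i ≤ d, i ≠ j. -/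

import Mathlib

/-!
Write `𝒢_m(Ψ)` for the coefficient of `u^m` in `(1 + βu⁻¹)⁻¹ Ψ`, so that `G^{(k)}_m = 𝒢_m(F^{(k)})`.
The map `𝒢_m` is linear over the coefficient ring and `𝒢_m(uΨ) = 𝒢_{m-1}(Ψ)`, so by the binomial
theorem the left-hand side is `𝒢_m(F^{(k)} · ∏_{i ≠ j} (1 + x̄_i (u + β)))`. Since
`(1 + x̄_i (u + β))(1 + βx_i) = 1 - x_i u`, each factor cancels the `i`-th factor of `F^{(k)}`,
leaving `(1 + βx_j)/(1 - x_j u) · ∏_ℓ (1 + (u + β) b_ℓ)`, whose coefficient of `u^{k+n}` is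
`(1 + βx_j) x_j^n [x_j|b]^k` for every `n ≥ 0`. With the factor `1 + βx_j`, the `β`-series defining
`𝒢_{k+n}` telescopes to `x_j^n [x_j|b]^k`.
-/

open scoped BigOperators

namespace GrothDet

/-- Index type for the indeterminates: `β`, `x₁,…,x_d`, `b₁,b₂,…`. -/
abbrev Idx (d : ℕ) := Unit ⊕ Fin d ⊕ ℕ

/-- The ambient ring: formal power series over `ℤ` in `β`, the `xᵢ` and the `bⱼ`. -/
abbrev R (d : ℕ) := MvPowerSeries (Idx d) ℤ

noncomputable def β (d : ℕ) : R d := MvPowerSeries.X (Sum.inl ())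
noncomputable def x (d : ℕ) (i : Fin d) : R d := MvPowerSeries.X (Sum.inr (Sum.inl i))
noncomputable def b (d : ℕ) (ℓ : ℕ) : R d := MvPowerSeries.X (Sum.inr (Sum.inr ℓ))

/-- `x ⊕ y := x + y + βxy`. -/
noncomputable def oplus (d : ℕ) (u v : R d) : R d := u + v + β d * u * v

/-- `[y|b]^k := (y ⊕ b₁)⋯(y ⊕ b_k)`. -/
noncomputable def fb (d : ℕ) (y : R d) (k : ℕ) : R d :=
  ∏ ℓ ∈ Finset.range k, oplus d y (b d ℓ)

/-- The multiplicative inverse of `1 + β * x j` (a unit since its constant term is `1`). -/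
noncomputable def invOneAdd (d : ℕ) (j : Fin d) : R d :=
  MvPowerSeries.invOfUnit (1 + β d * x d j) 1

/-- `F^{(k)}(u) = ∏ᵢ (1+βxᵢ)/(1-xᵢu) · ∏_{ℓ=1}^k (1+(u+β)b_ℓ)` as a power series in `u`
over `R d`; here `(1-xᵢu)⁻¹ = ∑_n xᵢⁿ uⁿ`. -/
noncomputable def F (d : ℕ) (k : ℕ) : PowerSeries (R d) :=
  (∏ i : Fin d,
      PowerSeries.C (1 + β d * x d i) * PowerSeries.mk fun n => x d i ^ n) *
    ∏ ℓ ∈ Finset.range k,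
      (1 + (PowerSeries.X + PowerSeries.C (β d)) * PowerSeries.C (b d ℓ))

/-- `[u^t] F^{(k)}(u)`, extended by `0` in negative degrees `t`. -/
noncomputable def Fcoeff (d : ℕ) (k : ℕ) (t : ℤ) : R d :=
  if 0 ≤ t then PowerSeries.coeff t.toNat (F d k) else 0

/-- The sum `∑_{s≥0} f s` of a family of power series such that `β^s ∣ f s`:
it is defined coefficientwise; on the coefficient of a monomial `n` only the
(finitely many) terms with `s ≤ n(β)` contribute, and the value is the limit of the
partial sums in the formal power series topology. -/
noncomputable def seriesSum (d : ℕ) (f : ℕ → R d) : R d :=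
  (fun n => ∑ s ∈ Finset.range (n (Sum.inl ()) + 1), MvPowerSeries.coeff n (f s) :
    (Idx d →₀ ℕ) → ℤ)

/-- `G^{(k)}_m = ∑_{s≥0} (-β)^s [u^{m+s}] F^{(k)}(u)`. -/
noncomputable def G (d : ℕ) (k : ℕ) (m : ℤ) : R d :=
  seriesSum d fun s => (-β d) ^ s * Fcoeff d k (m + s)

/-- The `p`-th elementary symmetric function of the family `f` restricted to `S`. -/
noncomputable def esym (d : ℕ) (S : Finset (Fin d)) (p : ℕ) (f : Fin d → R d) : R d :=
  ∑ t ∈ S.powersetCard p, ∏ i ∈ t, f i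

/-- `x_i/(1+βx_i) = -x̄_i`. -/
noncomputable def xbar (d : ℕ) (i : Fin d) : R d := x d i * invOneAdd d i

open PowerSeries
open Finset hiding mk

section CommRing

variable {A : Type*} [CommRing A]

theorem mk_pow_mul_one_sub_C_mul_X (a : A) : mk (a ^ ·) * (1 - C a * X) = 1 := by
  simpa [rescale_mk, rescale_X] using congrArg (rescale a) (mk_one_mul_one_sub_eq_one A)

theorem one_sub_C_mul_X_add_C_mul_C_mul_mk_pow {a β' x' : A} (h : a * (1 + β' * x') = x') :
    (1 - C a * (X + C β')) * (C (1 + β' * x') * mk (x' ^ ·)) = 1 := by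
  have hC : C a * C (1 + β' * x') = C x' := by rw [← map_mul, h]
  have hC' : C (1 + β' * x') = 1 + C β' * C x' := by simp
  calc _ = (1 - C a * (X + C β')) * C (1 + β' * x') * mk (x' ^ ·) := by ring
    _ = (1 - C x' * X) * mk (x' ^ ·) := by
      congr 1; linear_combination (-(X + C β')) * hC + hC'
    _ = 1 := by rw [mul_comm, mk_pow_mul_one_sub_C_mul_X]

theorem prod_one_sub_mul {ι : Type*} (s : Finset ι) (f : ι → A) (w : A) :
    ∏ i ∈ s, (1 - f i * w)
      = ∑ p ∈ range (#s + 1), (-1) ^ p * (∑ t ∈ s.powersetCard p, ∏ i ∈ t, f i) * w ^ p := by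
  calc ∏ i ∈ s, (1 - f i * w) = ∏ i ∈ s, (1 + -w * f i) := by congr! 1; ring
    _ = _ := by
      rw [prod_one_add, sum_powerset]
      refine sum_congr rfl fun p _ => ?_
      rw [mul_sum, sum_mul]
      refine sum_congr rfl fun t ht => ?_
      rw [prod_mul_distrib, prod_const, (mem_powersetCard.1 ht).2, neg_pow]
      ring

theorem coeff_mk_pow_mul_prod (x' β' : A) (b' : ℕ → A) (k n : ℕ) :
    coeff (k + n) (mk (x' ^ ·) * ∏ ℓ ∈ range k, (1 + (X + C β') * C (b' ℓ)))
      = x' ^ n * ∏ ℓ ∈ range k, (x' + b' ℓ + β' * x' * b' ℓ) := by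
  induction k generalizing n with
  | zero => simp
  | succ k ih =>
    set M := mk (x' ^ ·) * ∏ ℓ ∈ range k, (1 + (X + C β') * C (b' ℓ))
    have hM : mk (x' ^ ·) * ∏ ℓ ∈ range (k + 1), (1 + (X + C β') * C (b' ℓ))
        = X * (C (b' k) * M) + C (1 + β' * b' k) * M := by
      rw [prod_range_succ, map_add, map_one, map_mul]; ring
    rw [hM, map_add, show k + 1 + n = k + n + 1 by omega, coeff_succ_X_mul, coeff_C_mul,
      coeff_C_mul, add_assoc k n 1, ih, ih, prod_range_succ]
    ring

noncomputable def coeffZ (t : ℤ) : A⟦X⟧ →ₗ[A] A :=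
  if 0 ≤ t then coeff t.toNat else 0

theorem coeffZ_natCast (n : ℕ) (Ψ : A⟦X⟧) : coeffZ n Ψ = coeff n Ψ := by
  simp [coeffZ]

theorem coeffZ_X_mul (t : ℤ) (Ψ : A⟦X⟧) : coeffZ t (X * Ψ) = coeffZ (t - 1) Ψ := by
  unfold coeffZ
  rcases lt_trichotomy t 0 with h | rfl | h
  · rw [if_neg (by omega), if_neg (by omega)]; rfl
  · simp
  · rw [if_pos h.le, if_pos (by omega), show t.toNat = (t - 1).toNat + 1 by omega]
    exact coeff_succ_X_mul _ _

end CommRing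

variable {d : ℕ}

theorem coeff_eq_zero_of_β_pow_dvd {s : ℕ} {g : R d} (hg : β d ^ s ∣ g)
    {n : Idx d →₀ ℕ} (hn : n (Sum.inl ()) < s) : MvPowerSeries.coeff n g = 0 := by
  obtain ⟨c, rfl⟩ := hg
  rw [β, MvPowerSeries.X_pow_eq, MvPowerSeries.coeff_monomial_mul,
    if_neg (by rw [Finsupp.single_le_iff]; omega)]

theorem β_pow_dvd_neg_β_pow_mul (s : ℕ) (g : R d) : β d ^ s ∣ (-β d) ^ s * g :=
  (pow_dvd_pow_of_dvd (dvd_neg.2 dvd_rfl) s).mul_right g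

section seriesSum

variable {f g : ℕ → R d}

theorem coeff_seriesSum (n : Idx d →₀ ℕ) :
    MvPowerSeries.coeff n (seriesSum d f)
      = ∑ s ∈ range (n (Sum.inl ()) + 1), MvPowerSeries.coeff n (f s) := rfl

theorem coeff_seriesSum_of_lt (hf : ∀ s, β d ^ s ∣ f s) {n : Idx d →₀ ℕ} {N : ℕ}
    (hN : n (Sum.inl ()) < N) :
    MvPowerSeries.coeff n (seriesSum d f) = ∑ s ∈ range N, MvPowerSeries.coeff n (f s) := by
  refine sum_subset (range_subset_range.2 hN) fun s hsN hsn => ?_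
  exact coeff_eq_zero_of_β_pow_dvd (hf s) (by simpa using hsn)

theorem seriesSum_add :
    seriesSum d (fun s => f s + g s) = seriesSum d f + seriesSum d g := by
  ext n
  simp only [map_add, coeff_seriesSum, sum_add_distrib]

theorem mul_seriesSum (r : R d) (hf : ∀ s, β d ^ s ∣ f s) :
    r * seriesSum d f = seriesSum d (fun s => r * f s) := by
  classical
  ext n
  simp only [MvPowerSeries.coeff_mul, coeff_seriesSum]
  calc ∑ p ∈ antidiagonal n, MvPowerSeries.coeff p.1 r * MvPowerSeries.coeff p.2 (seriesSum d f)
      = ∑ p ∈ antidiagonal n, ∑ s ∈ range (n (Sum.inl ()) + 1),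
          MvPowerSeries.coeff p.1 r * MvPowerSeries.coeff p.2 (f s) := by
        refine sum_congr rfl fun p hp => ?_
        have hle : p.2 (Sum.inl ()) ≤ n (Sum.inl ()) := by
          rw [← mem_antidiagonal.1 hp]; simp
        rw [coeff_seriesSum_of_lt hf (Nat.lt_succ_of_le hle), mul_sum]
    _ = _ := sum_comm

theorem seriesSum_sub_succ (hg : ∀ s, β d ^ s ∣ g s) :
    seriesSum d (fun s => g s - g (s + 1)) = g 0 := by
  ext n
  rw [coeff_seriesSum]
  simp only [map_sub]
  rw [sum_range_sub', coeff_eq_zero_of_β_pow_dvd (hg _) (Nat.lt_succ_self _), sub_zero]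

end seriesSum

/-- `Gcoeff d m Ψ` is the coefficient of `u ^ m` in `(1 + β u⁻¹)⁻¹ Ψ`, so that
`G d k m = Gcoeff d m (F d k)`. -/
noncomputable def Gcoeff (d : ℕ) (m : ℤ) : PowerSeries (R d) →ₗ[R d] R d where
  toFun Ψ := seriesSum d fun s => (-β d) ^ s * coeffZ (m + s) Ψ
  map_add' Ψ Θ := by simp only [map_add, mul_add, seriesSum_add]
  map_smul' r Ψ := by
    simp only [map_smul, smul_eq_mul, RingHom.id_apply,
      mul_seriesSum r fun s => β_pow_dvd_neg_β_pow_mul s _, mul_left_comm r]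

theorem Gcoeff_apply (m : ℤ) (Ψ : PowerSeries (R d)) :
    Gcoeff d m Ψ = seriesSum d fun s => (-β d) ^ s * coeffZ (m + s) Ψ := rfl

theorem G_eq_Gcoeff (k : ℕ) (m : ℤ) : G d k m = Gcoeff d m (F d k) := by
  simp only [G, Gcoeff_apply, Fcoeff, coeffZ]
  congr 2 with s
  split_ifs <;> rfl

theorem Gcoeff_X_mul (m : ℤ) (Ψ : PowerSeries (R d)) :
    Gcoeff d m (X * Ψ) = Gcoeff d (m - 1) Ψ := by
  simp only [Gcoeff_apply, coeffZ_X_mul, sub_add_eq_add_sub]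

theorem Gcoeff_X_pow_mul (a : ℕ) (m : ℤ) (Ψ : PowerSeries (R d)) :
    Gcoeff d m (X ^ a * Ψ) = Gcoeff d (m - a) Ψ := by
  induction a generalizing m with
  | zero => simp
  | succ a ih =>
    rw [pow_succ', mul_assoc, Gcoeff_X_mul, ih, Nat.cast_succ, sub_add_eq_sub_sub_swap]

theorem Gcoeff_X_add_C_pow_mul (p : ℕ) (m : ℤ) (Ψ : PowerSeries (R d)) :
    Gcoeff d m ((X + C (β d)) ^ p * Ψ)
      = ∑ s ∈ range (p + 1), (p.choose s : R d) * (β d ^ s * Gcoeff d (m - p + s) Ψ) := by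
  rw [add_comm, add_pow, sum_mul, map_sum]
  refine sum_congr rfl fun s hs => ?_
  have hsp : s ≤ p := Nat.lt_succ_iff.1 (mem_range.1 hs)
  rw [show C (β d) ^ s * X ^ (p - s) * (p.choose s : PowerSeries (R d)) * Ψ
      = ((p.choose s : R d) * β d ^ s) • (X ^ (p - s) * Ψ) by
        rw [smul_eq_C_mul, map_mul, map_pow, map_natCast]; ring,
    map_smul, Gcoeff_X_pow_mul, smul_eq_mul, Nat.cast_sub hsp, ← sub_add]
  ring

/-- The factor `1 + β a` turns the series defining `Gcoeff` into a telescoping one. -/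
theorem Gcoeff_eq_of_coeffZ_eq {m : ℤ} {Ψ : PowerSeries (R d)} (a c : R d)
    (h : ∀ s : ℕ, coeffZ (m + s) Ψ = (1 + β d * a) * a ^ s * c) : Gcoeff d m Ψ = c := by
  calc Gcoeff d m Ψ
      = seriesSum d fun s => (-β d) ^ s * (a ^ s * c) - (-β d) ^ (s + 1) * (a ^ (s + 1) * c) := by
        rw [Gcoeff_apply]
        congr 1
        funext s
        rw [h]; ring
    _ = c := by
        rw [seriesSum_sub_succ fun s => β_pow_dvd_neg_β_pow_mul s _]; simp

theorem xbar_mul_one_add_β_mul (i : Fin d) : xbar d i * (1 + β d * x d i) = x d i := by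
  rw [xbar, mul_assoc, mul_comm (invOneAdd d i), invOneAdd,
    MvPowerSeries.mul_invOfUnit _ _ (by simp [β, x]), mul_one]

theorem F_mul_prod_one_sub_C_xbar_mul (k : ℕ) (j : Fin d) :
    F d k * ∏ i ∈ univ \ {j}, (1 - C (xbar d i) * (X + C (β d)))
      = C (1 + β d * x d j) * mk (x d j ^ ·)
          * ∏ ℓ ∈ range k, (1 + (X + C (β d)) * C (b d ℓ)) := by
  classical
  have hcancel : (∏ i ∈ univ.erase j, C (1 + β d * x d i) * mk (x d i ^ ·))
      * ∏ i ∈ univ.erase j, (1 - C (xbar d i) * (X + C (β d))) = 1 := by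
    rw [← prod_mul_distrib]
    exact prod_eq_one fun i _ =>
      (mul_comm _ _).trans (one_sub_C_mul_X_add_C_mul_C_mul_mk_pow (xbar_mul_one_add_β_mul i))
  rw [F, ← mul_prod_erase univ _ (mem_univ j), sdiff_singleton_eq_erase]
  linear_combination (C (1 + β d * x d j) * mk (x d j ^ ·)
    * ∏ ℓ ∈ range k, (1 + (X + C (β d)) * C (b d ℓ))) * hcancel

theorem prod_one_sub_C_xbar_mul (j : Fin d) (w : PowerSeries (R d)) :
    ∏ i ∈ univ \ {j}, (1 - C (xbar d i) * w)
      = ∑ p ∈ range d, C ((-1) ^ p * esym d (univ \ {j}) p (xbar d)) * w ^ p := by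
  have hcard : #(univ \ {j}) + 1 = d := by
    rw [card_sdiff_of_subset (subset_univ _), card_univ, Fintype.card_fin, card_singleton]
    exact Nat.sub_add_cancel j.pos
  rw [prod_one_sub_mul, hcard]
  simp only [esym, map_mul, map_pow, map_neg, map_one, map_sum, map_prod]

theorem Gcoeff_C_mul_mk_pow_mul_prod (k n : ℕ) (y : R d) :
    Gcoeff d (k + n)
        (C (1 + β d * y) * mk (y ^ ·) * ∏ ℓ ∈ range k, (1 + (X + C (β d)) * C (b d ℓ)))
      = y ^ n * fb d y k := by
  refine Gcoeff_eq_of_coeffZ_eq y _ fun s => ?_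
  rw [show (k : ℤ) + n + s = ((k + (n + s) : ℕ) : ℤ) by push_cast; ring, coeffZ_natCast,
    mul_assoc, coeff_C_mul, coeff_mk_pow_mul_prod, fb]
  simp only [oplus]
  ring

/-- For `m ≥ k`:
`∑_{p=0}^{d-1} ∑_{s=0}^{p} C(p,s) β^s G^{(k)}_{m-p+s} (-1)^p ē_p^{(j)} = x_j^{m-k} [x_j|b]^k`,
where `ē_p^{(j)}` is the `p`-th elementary symmetric function of the `x_i/(1+βx_i)`, `i ≠ j`. -/
theorem grothendieck_convolution_ebar
    (d k : ℕ) (j : Fin d) (m : ℤ) (hm : (k : ℤ) ≤ m) :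
    ∑ p ∈ Finset.range d, ∑ s ∈ Finset.range (p + 1),
        ((p.choose s : ℤ) • (β d ^ s * G d k (m - p + s))) *
          ((-1 : R d) ^ p * esym d (Finset.univ \ {j}) p (xbar d))
      = x d j ^ (m - k).toNat * fb d (x d j) k := by
  obtain ⟨n, rfl⟩ : ∃ n : ℕ, m = k + n := ⟨(m - k).toNat, by omega⟩
  calc _ = ∑ p ∈ range d, Gcoeff d (k + n)
        (C ((-1) ^ p * esym d (univ \ {j}) p (xbar d)) * (X + C (β d)) ^ p * F d k) := by
        refine sum_congr rfl fun p _ => ?_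
        rw [mul_assoc, ← smul_eq_C_mul, map_smul, Gcoeff_X_add_C_pow_mul, smul_eq_mul, mul_sum]
        refine sum_congr rfl fun s _ => ?_
        rw [G_eq_Gcoeff, zsmul_eq_mul, Int.cast_natCast, mul_comm]
    _ = Gcoeff d (k + n) (F d k * ∏ i ∈ univ \ {j}, (1 - C (xbar d i) * (X + C (β d)))) := by
        rw [prod_one_sub_C_xbar_mul, mul_sum, map_sum]
        simp only [mul_comm (F d k)]
    _ = x d j ^ (k + n - k : ℤ).toNat * fb d (x d j) k := by
        rw [F_mul_prod_one_sub_C_xbar_mul, Gcoeff_C_mul_mk_pow_mul_prod]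
        simp

end GrothDet
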